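/- Let A be a ring, M an A-module, and P a projective A-module with Hom_A(P, M) = 0. Let K be a submodule of P such that there exists a surjective A-linear map from P^N onto K for some natural number N. Then Ext^1_A(P/K, M) = 0. -/

import Mathlib

/-!
The sequence `P^N → P → P/K → 0` is exact with projective terms, so continuing it by syzygies
gives a projective resolution of `P/K` whose degree-one term is `P^N`. Then `Ext¹(P/K, M)` is a
subquotient of `Hom(P^N, M) ≅ Hom(P, M)^N = 0`.
-/

universe u

open CategoryTheory Limits

namespace CategoryTheory.ProjectiveResolution

variable {C : Type*} [Category* C] [Abelian C] [EnoughProjectives C]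

noncomputable def syzygiesStep {X₀ X₁ : C} (f : X₁ ⟶ X₀) :
    Σ' (X₂ : C) (d : X₂ ⟶ X₁), d ≫ f = 0 :=
  ⟨_, Projective.d f,
    (Category.assoc _ _ _).trans ((Projective.π _ ≫= kernel.condition f).trans comp_zero)⟩

section

variable (S : ShortComplex C)

noncomputable def ofExactComplex : ChainComplex C ℕ :=
  ChainComplex.mk' S.X₂ S.X₁ S.f syzygiesStep

lemma ofExactComplex_d_one_zero : (ofExactComplex S).d 1 0 = S.f := by
  simp [ofExactComplex]

lemma ofExactComplex_d_succ_succ (n : ℕ) :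
    (ofExactComplex S).d (n + 2) (n + 1) =
      (ChainComplex.mk'XIso S.X₂ S.X₁ S.f syzygiesStep n).hom ≫
        Projective.d ((ofExactComplex S).d (n + 1) n) :=
  ChainComplex.mk'_d _ _ _ _ n

lemma ofExactComplex_exactAt_succ (n : ℕ) : (ofExactComplex S).ExactAt (n + 1) := by
  rw [HomologicalComplex.exactAt_iff' _ (n + 2) (n + 1) n (by simp) (by simp)]
  refine ShortComplex.exact_of_iso ?_ (exact_d_f ((ofExactComplex S).d (n + 1) n))
  refine ShortComplex.isoMk (ChainComplex.mk'XIso S.X₂ S.X₁ S.f syzygiesStep n).symm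
    (Iso.refl _) (Iso.refl _) ?_ ?_
  · exact ((Iso.inv_comp_eq _).2 (ofExactComplex_d_succ_succ S n)).trans (Category.comp_id _).symm
  · exact (Category.id_comp _).trans (Category.comp_id _).symm

instance [Projective S.X₁] [Projective S.X₂] (n : ℕ) : Projective ((ofExactComplex S).X n) := by
  obtain (_ | _ | _ | n) := n
  · exact ‹Projective S.X₂›
  · exact ‹Projective S.X₁›
  all_goals apply Projective.projective_over

noncomputable def ofExact (hS : S.Exact) [Epi S.g] [Projective S.X₁] [Projective S.X₂] :
    ProjectiveResolution S.X₃ where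
  complex := ofExactComplex S
  π := (ChainComplex.toSingle₀Equiv _ _).symm ⟨S.g, by rw [ofExactComplex_d_one_zero]; exact S.zero⟩
  quasiIso := ⟨fun n => by
    cases n
    · rw [ChainComplex.quasiIsoAt₀_iff, ShortComplex.quasiIso_iff_of_zeros']
      · refine (ShortComplex.exact_and_epi_g_iff_of_iso ?_).2 ⟨hS, ‹_›⟩
        -- `(ofExactComplex S).X 0` is `S.X₂` only after unfolding `ChainComplex.mk'`, which
        -- `simp` does not do, hence the explicit terms.
        exact ShortComplex.isoMk (Iso.refl _) (Iso.refl _) (Iso.refl _)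
          ((Category.id_comp S.f).trans ((ofExactComplex_d_one_zero S).symm.trans
            (Category.comp_id ((ofExactComplex S).d 1 0)).symm))
          ((Category.id_comp S.g).trans
            ((ChainComplex.toSingle₀Equiv_symm_apply_f_zero (C := ofExactComplex S) S.g _).symm.trans
              (Category.comp_id _).symm))
      all_goals rfl
    · rw [quasiIsoAt_iff_exactAt']
      · exact ofExactComplex_exactAt_succ S _
      · exact ChainComplex.exactAt_succ_single_obj _ _⟩

end

lemma isZero_Ext_of_hom_eq_zero {R : Type*} [Ring R] [Linear R C] {X : C}
    (Q : ProjectiveResolution X) (n : ℕ) (Y : C) (h : ∀ f : Q.complex.X n ⟶ Y, f = 0) :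
    IsZero (((Ext R C n).obj (Opposite.op X)).obj Y) := by
  refine IsZero.of_iso ?_ (Q.isoExt n Y)
  rw [← HomologicalComplex.exactAt_iff_isZero_homology, HomologicalComplex.exactAt_iff]
  have : Subsingleton (Q.complex.X n ⟶ Y) := ⟨fun f f' => (h f).trans (h f').symm⟩
  exact ShortComplex.exact_of_isZero_X₂ _ (@ModuleCat.isZero_of_subsingleton _ _ _ this)

end CategoryTheory.ProjectiveResolution

section

variable {A : Type*} [Ring A] {P M : Type*} [AddCommGroup P] [Module A P] [AddCommGroup M]
  [Module A M] {ι : Type*}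

instance Module.Projective.pi [Fintype ι] [Module.Projective A P] :
    Module.Projective A (ι → P) :=
  .of_equiv (DFinsupp.linearEquivFunOnFintype (R := A) (M := fun _ : ι => P))

instance LinearMap.subsingleton_pi [Finite ι] [Subsingleton (P →ₗ[A] M)] :
    Subsingleton ((ι → P) →ₗ[A] M) := by
  classical
  exact ⟨fun f g => LinearMap.pi_ext' fun i => Subsingleton.elim _ _⟩

end

/-- Let `P` be a projective `A`-module with `Hom_A(P, M) = 0`, and let `K` be a submodule of `P`
which is an epimorphic image of a finite power `P^N` of `P`.  Then `Ext¹_A(P/K, M) = 0`. -/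
theorem ext_one_of_quotient_of_projective_vanishes
    (A : Type u) [Ring A]
    (P M : Type u) [AddCommGroup P] [Module A P] [AddCommGroup M] [Module A M]
    [Module.Projective A P]
    (hPM : ∀ f : P →ₗ[A] M, f = 0)
    (K : Submodule A P) (N : ℕ)
    (g : (Fin N → P) →ₗ[A] K) (hg : Function.Surjective g) :
    CategoryTheory.Limits.IsZero
      (((Ext ℤ (ModuleCat.{u} A) 1).obj
        (Opposite.op (ModuleCat.of A (P ⧸ K)))).obj (ModuleCat.of A M)) := by
  let S := ShortComplex.mk (ModuleCat.ofHom (K.subtype ∘ₗ g)) (ModuleCat.ofHom K.mkQ)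
    (by ext x; simp)
  have hS : S.Exact := by
    rw [ShortComplex.moduleCat_exact_iff_range_eq_ker]
    simp [S, LinearMap.range_comp_of_range_eq_top _ (LinearMap.range_eq_top.2 hg)]
  have : Epi S.g := (ModuleCat.epi_iff_surjective _).2 K.mkQ_surjective
  have : Subsingleton (P →ₗ[A] M) := ⟨fun f f' => (hPM f).trans (hPM f').symm⟩
  exact (ProjectiveResolution.ofExact S hS).isZero_Ext_of_hom_eq_zero 1 _ fun f =>
    ModuleCat.hom_ext (Subsingleton.elim (α := (Fin N → P) →ₗ[A] M) _ _)
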